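/- Let E be a pseudo effect algebra satisfying (RDP). If s₁ and s₂ are two distinct extremal states on E, then s₁ ⋀ s₂ = 0 in the lattice J(E). -/

import Mathlib

/-!
Under (RDP) the meet of two measures in `J(E)` is computed pointwise as
`(s₁ ⋀ s₂)(a) = inf {s₁ b + s₂ c | a = b + c}`: splitting decompositions of `a + b` by (RDP)
makes this infimum additive. If `α = (s₁ ⋀ s₂)(1)` were nonzero, each extremal `sᵢ`, lying
above `s₁ ⋀ s₂`, would have to equal the normalised measure `α⁻¹ • (s₁ ⋀ s₂)`, so `s₁ = s₂`.
-/

/-- A pseudo effect algebra: a partial algebra `(E; +, 0, 1)` where the partial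
addition is encoded as `padd : E → E → Option E` (`padd a b = some c` means
`a + b` is defined and equals `c`). -/
class PseudoEffectAlgebra (E : Type) where
  padd : E → E → Option E
  pzero : E
  pone : E
  /-- (i) `a+b` and `(a+b)+c` exist iff `b+c` and `a+(b+c)` exist ... -/
  assoc_defined : ∀ a b c : E,
    (∃ x, padd a b = some x ∧ (padd x c).isSome) ↔
      (∃ y, padd b c = some y ∧ (padd a y).isSome)
  /-- ... and in this case `(a+b)+c = a+(b+c)`. -/
  assoc_eq : ∀ a b c x y : E, padd a b = some x → padd b c = some y →
    padd x c = padd a y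
  /-- (ii) there is exactly one `d` with `a + d = 1`. -/
  exists_unique_right : ∀ a : E, ∃! d, padd a d = some pone
  /-- (ii) there is exactly one `e` with `e + a = 1`. -/
  exists_unique_left : ∀ a : E, ∃! e, padd e a = some pone
  /-- (iii) if `a+b` exists, there are `d, e` with `a+b = d+a = b+e`. -/
  shift : ∀ a b c : E, padd a b = some c →
    ∃ d e, padd d a = some c ∧ padd b e = some c
  /-- (iv) if `1+a` exists then `a = 0`. -/
  one_add : ∀ a : E, (padd pone a).isSome → a = pzero
  /-- (iv) if `a+1` exists then `a = 0`. -/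
  add_one : ∀ a : E, (padd a pone).isSome → a = pzero

namespace PseudoEffectAlgebra

variable {E : Type} [PseudoEffectAlgebra E]

/-- The induced partial order: `a ≤ b` iff `b = a + c` for some `c ∈ E`. -/
def pLe (a b : E) : Prop := ∃ c, padd a c = some b

/-- The Riesz Decomposition Property (RDP). -/
def RDP (E : Type) [PseudoEffectAlgebra E] : Prop :=
  ∀ a₁ a₂ b₁ b₂ c : E, padd a₁ a₂ = some c → padd b₁ b₂ = some c →
    ∃ d₁ d₂ d₃ d₄ : E, padd d₁ d₂ = some a₁ ∧ padd d₃ d₄ = some a₂ ∧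
      padd d₁ d₃ = some b₁ ∧ padd d₂ d₄ = some b₂

/-- A signed measure on `E`. -/
def IsSignedMeasure (m : E → ℝ) : Prop :=
  ∀ a b c : E, padd a b = some c → m c = m a + m b

/-- A (positive) measure on `E`. -/
def IsMeasure (m : E → ℝ) : Prop :=
  IsSignedMeasure m ∧ ∀ a : E, 0 ≤ m a

/-- A state on `E`. -/
def IsState (s : E → ℝ) : Prop := IsMeasure s ∧ s pone = 1

/-- A Jordan signed measure: a difference of two measures. -/
def IsJordan (m : E → ℝ) : Prop :=
  ∃ m₁ m₂ : E → ℝ, IsMeasure m₁ ∧ IsMeasure m₂ ∧ m = m₁ - m₂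

/-- `m ≤⁺ m'` iff `m' - m` is a (positive) measure. -/
def MLe (m m' : E → ℝ) : Prop := IsMeasure (m' - m)

/-- The (partial) sum `x₁ + ⋯ + xₙ` of a nonempty list of elements of `E`. -/
def lsum : List E → Option E
  | [] => some pzero
  | [a] => some a
  | a :: b :: l => (lsum (b :: l)).bind (fun s => padd a s)

/-- `m` is the supremum, in the po-group `J(E)` of Jordan signed measures ordered
by `≤⁺`, of the set `S`. -/
def IsSupIn (S : Set (E → ℝ)) (m : E → ℝ) : Prop :=
  IsJordan m ∧ (∀ t ∈ S, MLe t m) ∧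
    ∀ h : E → ℝ, IsJordan h → (∀ t ∈ S, MLe t h) → MLe m h

/-- `m` is the infimum, in the po-group `J(E)` of Jordan signed measures ordered
by `≤⁺`, of the set `S`. -/
def IsInfIn (S : Set (E → ℝ)) (m : E → ℝ) : Prop :=
  IsJordan m ∧ (∀ t ∈ S, MLe m t) ∧
    ∀ h : E → ℝ, IsJordan h → (∀ t ∈ S, MLe h t) → MLe h m

/-- An extremal state: a state that is not a nontrivial convex combination of
two states. -/
def IsExtremalState (s : E → ℝ) : Prop :=
  IsState s ∧ ∀ s₁ s₂ : E → ℝ, IsState s₁ → IsState s₂ →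
    ∀ lam : ℝ, 0 < lam → lam < 1 → s = lam • s₁ + (1 - lam) • s₂ → s = s₁ ∧ s = s₂

open scoped Pointwise

lemma exists_padd_assoc {a b c x z : E} (hab : padd a b = some x)
    (hxc : padd x c = some z) : ∃ y, padd b c = some y ∧ padd a y = some z := by
  obtain ⟨y, hbc, -⟩ := (assoc_defined a b c).1 ⟨x, hab, by rw [hxc]; rfl⟩
  exact ⟨y, hbc, by rw [← assoc_eq a b c x y hab hbc, hxc]⟩

lemma exists_padd_assoc' {a b c y z : E} (hbc : padd b c = some y)
    (hay : padd a y = some z) : ∃ x, padd a b = some x ∧ padd x c = some z := by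
  obtain ⟨x, hab, -⟩ := (assoc_defined a b c).2 ⟨y, hbc, by rw [hay]; rfl⟩
  exact ⟨x, hab, by rw [assoc_eq a b c x y hab hbc, hay]⟩

lemma zero_padd_one : padd (pzero : E) pone = some pone := by
  obtain ⟨e, he, -⟩ := exists_unique_left (pone : E)
  rwa [PseudoEffectAlgebra.add_one e (by rw [he]; rfl)] at he

lemma one_padd_zero : padd (pone : E) pzero = some pone := by
  obtain ⟨d, hd, -⟩ := exists_unique_right (pone : E)
  rwa [PseudoEffectAlgebra.one_add d (by rw [hd]; rfl)] at hd

lemma zero_padd (a : E) : padd (pzero : E) a = some a := by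
  obtain ⟨d, hd, -⟩ := exists_unique_right a
  obtain ⟨x, hx, hxd⟩ := exists_padd_assoc' hd zero_padd_one
  rwa [(exists_unique_left d).unique hxd hd] at hx

lemma padd_zero (a : E) : padd a (pzero : E) = some a := by
  obtain ⟨e, he, -⟩ := exists_unique_left a
  obtain ⟨y, hy, hey⟩ := exists_padd_assoc he one_padd_zero
  rwa [(exists_unique_right e).unique hey he] at hy

/-- In `(a₁ + a₂) + (b₁ + b₂)` the middle summand `a₂` can be carried past `b₁`,
at the price of replacing `b₁` by the element `d` with `d + a₂ = a₂ + b₁`. -/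
lemma exists_padd_swap {a b c a₁ a₂ b₁ b₂ : E} (hab : padd a b = some c)
    (ha : padd a₁ a₂ = some a) (hb : padd b₁ b₂ = some b) :
    ∃ d u w x, padd a₁ d = some u ∧ padd u w = some c ∧ padd a₂ b₂ = some w ∧
      padd d a₂ = some x ∧ padd a₂ b₁ = some x := by
  obtain ⟨y, hy, hay⟩ := exists_padd_assoc ha hab
  obtain ⟨x, hx, hxb₂⟩ := exists_padd_assoc' hb hy
  obtain ⟨d, -, hd, -⟩ := shift a₂ b₁ x hx
  obtain ⟨w, hw, hdw⟩ := exists_padd_assoc hd hxb₂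
  obtain ⟨u, hu, huw⟩ := exists_padd_assoc' hdw hay
  exact ⟨d, u, w, x, hu, huw, hw, hd, hx⟩

section Measures

variable {m m' : E → ℝ}

lemma IsSignedMeasure.map_zero (hm : IsSignedMeasure m) : m pzero = 0 := by
  have := hm pzero pzero pzero (padd_zero pzero)
  linarith

lemma IsSignedMeasure.sub (hm : IsSignedMeasure m) (hm' : IsSignedMeasure m') :
    IsSignedMeasure (m - m') := fun a b c h => by
  simp only [Pi.sub_apply, hm a b c h, hm' a b c h]; ring

lemma IsSignedMeasure.smul (hm : IsSignedMeasure m) (r : ℝ) : IsSignedMeasure (r • m) :=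
  fun a b c h => by simp only [Pi.smul_apply, smul_eq_mul, hm a b c h]; ring

lemma isMeasure_zero : IsMeasure (0 : E → ℝ) :=
  ⟨fun _ _ _ _ => by simp, fun _ => le_rfl⟩

lemma IsMeasure.isJordan (hm : IsMeasure m) : IsJordan m :=
  ⟨m, 0, hm, isMeasure_zero, (sub_zero m).symm⟩

lemma IsJordan.isSignedMeasure (hm : IsJordan m) : IsSignedMeasure m := by
  obtain ⟨m₁, m₂, h₁, h₂, rfl⟩ := hm
  exact h₁.1.sub h₂.1

lemma MLe.le (h : MLe m m') (a : E) : m a ≤ m' a :=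
  sub_nonneg.1 (h.2 a)

lemma mLe_of_le (hm : IsSignedMeasure m) (hm' : IsSignedMeasure m')
    (h : ∀ a, m a ≤ m' a) : MLe m m' :=
  ⟨hm'.sub hm, fun a => sub_nonneg.2 (h a)⟩

lemma IsMeasure.eq_zero_of_map_one (hm : IsMeasure m) (h1 : m pone = 0) : m = 0 := by
  funext a
  obtain ⟨d, hd, -⟩ := exists_unique_right a
  show m a = 0
  have := hm.1 a d pone hd
  linarith [hm.2 a, hm.2 d]

lemma IsMeasure.isState_inv_smul (hm : IsMeasure m) (h1 : m pone ≠ 0) :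
    IsState ((m pone)⁻¹ • m) := by
  refine ⟨⟨hm.1.smul _, fun a => ?_⟩, inv_mul_cancel₀ h1⟩
  exact mul_nonneg (inv_nonneg.2 (hm.2 pone)) (hm.2 a)

end Measures

section Meet

variable {s₁ s₂ : E → ℝ}

def decompValues (s₁ s₂ : E → ℝ) (a : E) : Set ℝ :=
  {x | ∃ b c, padd b c = some a ∧ x = s₁ b + s₂ c}

noncomputable def pmeet (s₁ s₂ : E → ℝ) (a : E) : ℝ := sInf (decompValues s₁ s₂ a)

lemma decompValues_nonempty (s₁ s₂ : E → ℝ) (a : E) : (decompValues s₁ s₂ a).Nonempty :=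
  ⟨_, a, pzero, padd_zero a, rfl⟩

lemma zero_mem_lowerBounds_decompValues (h₁ : IsMeasure s₁) (h₂ : IsMeasure s₂) (a : E) :
    0 ∈ lowerBounds (decompValues s₁ s₂ a) := by
  rintro x ⟨b, c, -, rfl⟩
  linarith [h₁.2 b, h₂.2 c]

lemma pmeet_le (h₁ : IsMeasure s₁) (h₂ : IsMeasure s₂) {a b c : E}
    (hbc : padd b c = some a) : pmeet s₁ s₂ a ≤ s₁ b + s₂ c :=
  csInf_le ⟨0, zero_mem_lowerBounds_decompValues h₁ h₂ a⟩ ⟨b, c, hbc, rfl⟩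

lemma le_pmeet {h : E → ℝ} (hh : IsSignedMeasure h) (h₁ : ∀ a, h a ≤ s₁ a)
    (h₂ : ∀ a, h a ≤ s₂ a) (a : E) : h a ≤ pmeet s₁ s₂ a := by
  refine le_csInf (decompValues_nonempty s₁ s₂ a) ?_
  rintro x ⟨b, c, hbc, rfl⟩
  linarith [hh b c a hbc, h₁ b, h₂ c]

lemma pmeet_nonneg (h₁ : IsMeasure s₁) (h₂ : IsMeasure s₂) (a : E) : 0 ≤ pmeet s₁ s₂ a :=
  le_csInf (decompValues_nonempty s₁ s₂ a) (zero_mem_lowerBounds_decompValues h₁ h₂ a)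

lemma pmeet_le_left (h₁ : IsMeasure s₁) (h₂ : IsMeasure s₂) (a : E) :
    pmeet s₁ s₂ a ≤ s₁ a := by
  simpa [h₂.1.map_zero] using pmeet_le h₁ h₂ (padd_zero a)

lemma pmeet_le_right (h₁ : IsMeasure s₁) (h₂ : IsMeasure s₂) (a : E) :
    pmeet s₁ s₂ a ≤ s₂ a := by
  simpa [h₁.1.map_zero] using pmeet_le h₁ h₂ (zero_padd a)

lemma decompValues_add_subset (h₁ : IsSignedMeasure s₁) (h₂ : IsSignedMeasure s₂)
    {a b c : E} (hab : padd a b = some c) :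
    decompValues s₁ s₂ a + decompValues s₁ s₂ b ⊆ decompValues s₁ s₂ c := by
  rintro _ ⟨_, ⟨a₁, a₂, ha, rfl⟩, _, ⟨b₁, b₂, hb, rfl⟩, rfl⟩
  obtain ⟨d, u, w, x, hu, huw, hw, hd, hx⟩ := exists_padd_swap hab ha hb
  refine ⟨u, w, huw, ?_⟩
  linarith [h₁ a₁ d u hu, h₂ a₂ b₂ w hw, h₁ d a₂ x hd, h₁ a₂ b₁ x hx]

lemma pmeet_le_pmeet_add_pmeet (h₁ : IsMeasure s₁) (h₂ : IsMeasure s₂) {a b c : E}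
    (hab : padd a b = some c) : pmeet s₁ s₂ c ≤ pmeet s₁ s₂ a + pmeet s₁ s₂ b := by
  have bdd : ∀ e, BddBelow (decompValues s₁ s₂ e) :=
    fun e => ⟨0, zero_mem_lowerBounds_decompValues h₁ h₂ e⟩
  unfold pmeet
  rw [← csInf_add (decompValues_nonempty _ _ _) (bdd a)
    (decompValues_nonempty _ _ _) (bdd b)]
  exact csInf_le_csInf (bdd c) ((decompValues_nonempty _ _ _).add (decompValues_nonempty _ _ _))
    (decompValues_add_subset h₁.1 h₂.1 hab)

lemma pmeet_add_pmeet_le_pmeet (hRDP : RDP E) (h₁ : IsMeasure s₁) (h₂ : IsMeasure s₂)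
    {a b c : E} (hab : padd a b = some c) :
    pmeet s₁ s₂ a + pmeet s₁ s₂ b ≤ pmeet s₁ s₂ c := by
  refine le_csInf (decompValues_nonempty s₁ s₂ c) ?_
  rintro x ⟨c₁, c₂, hc, rfl⟩
  obtain ⟨d₁, d₂, d₃, d₄, hd₁₂, hd₃₄, hd₁₃, hd₂₄⟩ := hRDP a b c₁ c₂ c hab hc
  linarith [pmeet_le h₁ h₂ hd₁₂, pmeet_le h₁ h₂ hd₃₄, h₁.1 d₁ d₃ c₁ hd₁₃, h₂.1 d₂ d₄ c₂ hd₂₄]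

lemma IsMeasure.pmeet (hRDP : RDP E) (h₁ : IsMeasure s₁) (h₂ : IsMeasure s₂) :
    IsMeasure (pmeet s₁ s₂) :=
  ⟨fun _ _ _ hab => le_antisymm (pmeet_le_pmeet_add_pmeet h₁ h₂ hab)
    (pmeet_add_pmeet_le_pmeet hRDP h₁ h₂ hab), pmeet_nonneg h₁ h₂⟩

lemma isInfIn_pmeet (hRDP : RDP E) (h₁ : IsMeasure s₁) (h₂ : IsMeasure s₂) :
    IsInfIn {s₁, s₂} (pmeet s₁ s₂) := by
  have hp := h₁.pmeet hRDP h₂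
  refine ⟨hp.isJordan, ?_, fun h hJ hle => ?_⟩
  · rintro t (rfl | rfl)
    · exact mLe_of_le hp.1 h₁.1 (pmeet_le_left h₁ h₂)
    · exact mLe_of_le hp.1 h₂.1 (pmeet_le_right h₁ h₂)
  · exact mLe_of_le hJ.isSignedMeasure hp.1
      (le_pmeet hJ.isSignedMeasure (hle s₁ (.inl rfl)).le (hle s₂ (.inr rfl)).le)

end Meet

/-- An extremal state is the normalisation of every nonzero measure below it: writing
`s = α • (α⁻¹ • p) + (1 - α) • ((1 - α)⁻¹ • (s - p))` with `α = p 1` exhibits `s` as a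
convex combination of two states unless `α = 1`. -/
lemma IsExtremalState.eq_inv_smul_of_mLe {s p : E → ℝ} (hs : IsExtremalState s)
    (hp : IsMeasure p) (hps : MLe p s) (hp1 : p pone ≠ 0) : s = (p pone)⁻¹ • p := by
  obtain ⟨⟨-, hs1⟩, hext⟩ := hs
  have hq1 : (s - p) pone = 1 - p pone := by rw [Pi.sub_apply, hs1]
  rcases (hps.le pone).trans_eq hs1 |>.eq_or_lt with hα | hα
  · have := hps.eq_zero_of_map_one (by rw [hq1, hα, sub_self])
    rw [sub_eq_zero.1 this, hα, inv_one, one_smul]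
  · have hβ : (s - p) pone ≠ 0 := by rw [hq1]; linarith
    refine (hext _ _ (hp.isState_inv_smul hp1) (hps.isState_inv_smul hβ) (p pone)
      (lt_of_le_of_ne (hp.2 pone) (Ne.symm hp1)) hα ?_).1
    rw [smul_inv_smul₀ hp1, ← hq1, smul_inv_smul₀ hβ, add_sub_cancel]

/-- Proposition 4.2, final part: two distinct extremal states on a
pseudo effect algebra with (RDP) satisfy `s₁ ⋀ s₂ = 0` in `J(E)`. -/
theorem stmt9 (hRDP : RDP E) (s₁ s₂ : E → ℝ)
    (h₁ : IsExtremalState s₁) (h₂ : IsExtremalState s₂) (hne : s₁ ≠ s₂) :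
    IsInfIn {s₁, s₂} (0 : E → ℝ) := by
  have hp := h₁.1.1.pmeet hRDP h₂.1.1
  have hinf := isInfIn_pmeet hRDP h₁.1.1 h₂.1.1
  suffices pmeet s₁ s₂ = 0 from this ▸ hinf
  refine hp.eq_zero_of_map_one (by_contra fun hp1 => hne ?_)
  exact (h₁.eq_inv_smul_of_mLe hp (hinf.2.1 s₁ (.inl rfl)) hp1).trans
    (h₂.eq_inv_smul_of_mLe hp (hinf.2.1 s₂ (.inr rfl)) hp1).symm

end PseudoEffectAlgebra
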